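/- Let G be a group, n a natural number, π : FreeGroup (Fin n) →* G a surjective group homomorphism, and R a subset of ker π whose normal closure equals ker π. Let τ : Fin n → G → ℂ be such that for each i ∈ Fin n the set {a ∈ G : τ i a ≠ 0} is finite, and let T̃ be the π-twisted free extension of τ. Then the following are equivalent: (1) there exists a derivation X of ℂ[G] such that T^X(π(FreeGroup.of i), a) = τ i a for all i ∈ Fin n and a ∈ G; (2) T̃(r, a) = 0 for every r ∈ R and every a ∈ G. -/

import Mathlib

/-!
The Leibniz rule on basis elements `single g 1` is exactly the cocycle identity
`T(gh, a) = T(g, h a h⁻¹) + T(h, a)` for the character of a derivation, and conversely every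
cocycle on `G` whose values are finitely supported is the character of a derivation. Pulling
back along `π` identifies cocycles on `G` with `π`-twisted cocycles on the free group that vanish
on `ker π`. A twisted cocycle on a free group is determined by its values on the generators, and
it vanishes on `ker π` as soon as it vanishes on `R`, because the kernel elements on which it
vanishes form a normal subgroup.
-/

open Function

/-- A right crossed homomorphism for the action of `H` on `G → M` by conjugation through `φ`. -/
def IsTwistedCocycle {H G M : Type*} [Group H] [Group G] [Add M] (φ : H →* G)
    (T : H → G → M) : Prop :=
  ∀ (w₁ w₂ : H) (a : G), T (w₂ * w₁) a = T w₂ (φ w₁ * a * (φ w₁)⁻¹) + T w₁ a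

namespace IsTwistedCocycle

variable {H G M : Type*} [Group H] [Group G] [AddGroup M] {φ : H →* G} {T : H → G → M}

theorem apply_one (hT : IsTwistedCocycle φ T) : T 1 = 0 := by
  funext a
  simpa using hT 1 1 a

theorem apply_inv (hT : IsTwistedCocycle φ T) (w : H) (a : G) :
    T w⁻¹ a = -T w ((φ w)⁻¹ * a * φ w) := by
  have h := hT w w⁻¹ ((φ w)⁻¹ * a * φ w)
  rw [inv_mul_cancel, hT.apply_one, show φ w * ((φ w)⁻¹ * a * φ w) * (φ w)⁻¹ = a by group]
    at h
  exact eq_neg_of_add_eq_zero_left h.symm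

theorem comp {K : Type*} [Group K] {ψ : G →* K} {t : G → K → M}
    (ht : IsTwistedCocycle ψ t) (φ : H →* G) : IsTwistedCocycle (ψ.comp φ) (t ∘ φ) := by
  intro w₁ w₂ a
  simp only [comp_apply, map_mul, MonoidHom.comp_apply]
  exact ht _ _ a

theorem freeGroup_ext {α : Type*} {φ : FreeGroup α →* G} {T T' : FreeGroup α → G → M}
    (hT : IsTwistedCocycle φ T) (hT' : IsTwistedCocycle φ T')
    (h : ∀ i, T (FreeGroup.of i) = T' (FreeGroup.of i)) : T = T' := by
  funext w
  induction w with
  | C1 => rw [hT.apply_one, hT'.apply_one]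
  | of i => exact h i
  | inv_of i _ => funext a; rw [hT.apply_inv, hT'.apply_inv, h]
  | mul x y hx hy => funext a; rw [hT y x, hT' y x, hx, hy]

theorem finite_support_freeGroup {α : Type*} {φ : FreeGroup α →* G}
    {T : FreeGroup α → G → M}
    (hT : IsTwistedCocycle φ T) (h : ∀ i, (support (T (FreeGroup.of i))).Finite)
    (w : FreeGroup α) : (support (T w)).Finite := by
  have conj_finite : ∀ (f : G → M) (g : G), (support f).Finite →
      (support fun a => f (g * a * g⁻¹)).Finite := fun f g hf =>
    hf.preimage (MulAut.conj g).injective.injOn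
  induction w with
  | C1 => simp [hT.apply_one]
  | of i => exact h i
  | inv_of i hi =>
    refine (conj_finite _ (φ (FreeGroup.of i))⁻¹ hi).subset fun a ha => ?_
    simpa [hT.apply_inv] using ha
  | mul x y hx hy =>
    refine ((conj_finite _ (φ y) hx).union hy).subset ?_
    rw [show T (x * y) = fun a => T x (φ y * a * (φ y)⁻¹) + T y a from funext (hT y x)]
    exact support_add _ _

def kerSubgroup (hT : IsTwistedCocycle φ T) : Subgroup H where
  carrier := {w | φ w = 1 ∧ T w = 0}
  one_mem' := ⟨map_one φ, hT.apply_one⟩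
  mul_mem' := by
    rintro x y ⟨hφx, hx⟩ ⟨hφy, hy⟩
    refine ⟨by rw [map_mul, hφx, hφy, one_mul], funext fun a => ?_⟩
    rw [hT y x, hx, hy]
    simp
  inv_mem' := by
    rintro x ⟨hφx, hx⟩
    refine ⟨by rw [map_inv, hφx, inv_one], funext fun a => ?_⟩
    rw [hT.apply_inv, hx]
    simp

instance kerSubgroup_normal (hT : IsTwistedCocycle φ T) : hT.kerSubgroup.Normal where
  conj_mem m := by
    rintro ⟨hφm, hm⟩ u
    refine ⟨by simp [hφm], funext fun a => ?_⟩
    rw [mul_assoc, hT (m * u⁻¹) u, hT u⁻¹ m, hm, hT.apply_inv, map_mul, hφm, one_mul,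
      map_inv]
    simp

theorem apply_eq_zero_of_mem_ker (hT : IsTwistedCocycle φ T) {R : Set H}
    (hR : R ⊆ φ.ker) (hker : φ.ker ≤ Subgroup.normalClosure R) (hRT : ∀ r ∈ R, T r = 0)
    {w : H} (hw : w ∈ φ.ker) : T w = 0 :=
  (Subgroup.normalClosure_le_normal (N := hT.kerSubgroup)
    (fun r hr => ⟨hR hr, hRT r hr⟩) (hker hw)).2

theorem exists_eq_comp (hT : IsTwistedCocycle φ T) (hφ : Surjective φ)
    (hker : ∀ w ∈ φ.ker, T w = 0) :
    ∃ t : G → G → M, IsTwistedCocycle (MonoidHom.id G) t ∧ T = t ∘ φ := by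
  have hfactor : ∀ w w', φ w = φ w' → T w = T w' := by
    intro w w' hww'
    have hmem : w' * w⁻¹ ∈ φ.ker := by
      rw [MonoidHom.mem_ker, map_mul, map_inv, hww', mul_inv_cancel]
    funext a
    rw [← inv_mul_cancel_right w' w, hT w (w' * w⁻¹), hker _ hmem]
    simp
  have hlift : ∀ w, (T ∘ surjInv hφ) (φ w) = T w := fun w => hfactor _ _ (surjInv_eq hφ _)
  refine ⟨T ∘ surjInv hφ, fun g h a => ?_, funext fun w => (hlift w).symm⟩
  obtain ⟨u, rfl⟩ := hφ g
  obtain ⟨v, rfl⟩ := hφ h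
  rw [MonoidHom.id_apply, ← map_mul, hlift, hlift, hlift, hT u v]

end IsTwistedCocycle

section Derivation

open MonoidAlgebra

theorem single_eq_smul_single_one {k M : Type*} [Semiring k] (m : M) (c : k) :
    single m c = c • single m 1 := by
  rw [smul_single', mul_one]

variable {k G : Type*} [Group G]

noncomputable def derivationCharacter [Semiring k]
    (X : MonoidAlgebra k G →ₗ[k] MonoidAlgebra k G) : G → G → k :=
  fun g a => (X (single g 1)).coeff (g * a)

theorem isTwistedCocycle_derivationCharacter [Semiring k]
    {X : MonoidAlgebra k G →ₗ[k] MonoidAlgebra k G}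
    (hX : ∀ u v, X (u * v) = X u * v + u * X v) :
    IsTwistedCocycle (MonoidHom.id G) (derivationCharacter X) := by
  intro g h a
  simp only [derivationCharacter, MonoidHom.id_apply]
  rw [← one_mul (1 : k), ← single_mul_single, hX, coeff_add, Finsupp.add_apply,
    coeff_mul_single_apply, coeff_single_mul_apply, mul_one, one_mul]
  congr 2 <;> group

theorem leibniz_of_leibniz_single [CommSemiring k]
    (X : MonoidAlgebra k G →ₗ[k] MonoidAlgebra k G)
    (h : ∀ g g' : G, X (single g 1 * single g' 1) =
      X (single g 1) * single g' 1 + single g 1 * X (single g' 1))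
    (u v : MonoidAlgebra k G) : X (u * v) = X u * v + u * X v := by
  induction u using MonoidAlgebra.induction_linear with
  | zero => simp
  | add u₁ u₂ h₁ h₂ => simp only [add_mul, map_add, h₁, h₂]; abel
  | single g c =>
    induction v using MonoidAlgebra.induction_linear with
    | zero => simp
    | add v₁ v₂ h₁ h₂ => simp only [mul_add, map_add, h₁, h₂]; abel
    | single g' d =>
      rw [single_eq_smul_single_one g, single_eq_smul_single_one g']
      simp only [smul_mul_smul_comm, map_smul, h, smul_add]

variable [CommSemiring k] (t : G → G → k) (ht : ∀ g, (support (t g)).Finite)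

noncomputable def derivationOfCocycle : MonoidAlgebra k G →ₗ[k] MonoidAlgebra k G :=
  (MonoidAlgebra.basis G k).constr k fun g =>
    ofCoeff (Finsupp.ofSupportFinite (t g ∘ (g⁻¹ * ·)) <| by
      rw [support_comp_eq_preimage]
      exact (ht g).preimage (mul_right_injective g⁻¹).injOn)

theorem coeff_derivationOfCocycle_single (g x : G) (c : k) :
    (derivationOfCocycle t ht (single g c)).coeff x = c * t g (g⁻¹ * x) := by
  rw [single_eq_smul_single_one, map_smul, ← MonoidAlgebra.basis_apply,
    derivationOfCocycle, Module.Basis.constr_basis, coeff_smul]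
  rfl

theorem derivationCharacter_derivationOfCocycle :
    derivationCharacter (derivationOfCocycle t ht) = t := by
  funext g a
  rw [derivationCharacter, coeff_derivationOfCocycle_single, inv_mul_cancel_left, one_mul]

theorem derivationOfCocycle_mul (hcoc : IsTwistedCocycle (MonoidHom.id G) t)
    (u v : MonoidAlgebra k G) :
    derivationOfCocycle t ht (u * v) =
      derivationOfCocycle t ht u * v + u * derivationOfCocycle t ht v := by
  refine leibniz_of_leibniz_single _ (fun g h => ?_) u v
  ext x
  rw [single_mul_single, one_mul, coeff_add, Finsupp.add_apply, coeff_mul_single_apply,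
    coeff_single_mul_apply, coeff_derivationOfCocycle_single, coeff_derivationOfCocycle_single,
    coeff_derivationOfCocycle_single, hcoc]
  simp only [MonoidHom.id_apply, one_mul, mul_one]
  congr 2 <;> group

end Derivation

/-- Given a finite presentation `π : FreeGroup (Fin n) ↠ G` with relations `R`
(`R ⊆ ker π`, normal closure of `R` is `ker π`), and `τ : Fin n → G → ℂ` with each
`τ i` finitely supported, the following are equivalent: (1) there is a derivation `X`
of `ℂ[G]` whose character satisfies `T^X(π(of i), a) = τ i a`; (2) the `π`-twisted
free extension `T̃` of `τ` vanishes on `R`. -/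
theorem exists_derivation_iff_vanishes_on_relations {G : Type*} [Group G] (n : ℕ)
    (π : FreeGroup (Fin n) →* G) (hπ : Function.Surjective π)
    (R : Set (FreeGroup (Fin n))) (hR : R ⊆ (π.ker : Set (FreeGroup (Fin n))))
    (hRcl : Subgroup.normalClosure R = π.ker)
    (τ : Fin n → G → ℂ) (hτ : ∀ i : Fin n, {a : G | τ i a ≠ 0}.Finite)
    (T' : FreeGroup (Fin n) → G → ℂ)
    (hT1 : ∀ (i : Fin n) (a : G), T' (FreeGroup.of i) a = τ i a)
    (hT2 : ∀ (w₁ w₂ : FreeGroup (Fin n)) (a : G),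
      T' (w₂ * w₁) a = T' w₂ (π w₁ * a * (π w₁)⁻¹) + T' w₁ a) :
    (∃ X : MonoidAlgebra ℂ G →ₗ[ℂ] MonoidAlgebra ℂ G,
      (∀ u v : MonoidAlgebra ℂ G, X (u * v) = X u * v + u * X v) ∧
      (∀ (i : Fin n) (a : G),
        (X (MonoidAlgebra.single (π (FreeGroup.of i)) 1)).coeff (π (FreeGroup.of i) * a) = τ i a)) ↔
    (∀ r ∈ R, ∀ a : G, T' r a = 0) := by
  have hT : IsTwistedCocycle π T' := hT2
  have hτT : ∀ i, T' (FreeGroup.of i) = τ i := fun i => funext (hT1 i)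
  constructor
  · rintro ⟨X, hX, hchar⟩ r hr a
    have hTX : T' = derivationCharacter X ∘ π :=
      hT.freeGroup_ext ((isTwistedCocycle_derivationCharacter hX).comp π)
        fun i => (hτT i).trans (funext (hchar i)).symm
    rw [hTX, comp_apply, MonoidHom.mem_ker.mp (hR hr),
      (isTwistedCocycle_derivationCharacter hX).apply_one, Pi.zero_apply]
  · intro hvanish
    obtain ⟨t, ht, rfl⟩ := hT.exists_eq_comp hπ fun w =>
      hT.apply_eq_zero_of_mem_ker hR hRcl.ge fun r hr => funext (hvanish r hr)
    have hfin : ∀ g, (support (t g)).Finite := by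
      intro g
      obtain ⟨w, rfl⟩ := hπ g
      exact hT.finite_support_freeGroup (fun i => hτT i ▸ hτ i) w
    exact ⟨derivationOfCocycle t hfin, derivationOfCocycle_mul t hfin ht, fun i a =>
      (congr_fun₂ (derivationCharacter_derivationOfCocycle t hfin) _ a).trans (hT1 i a)⟩
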